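/- Let n ≥ 1, let A, B be n×n complex matrices, let m : ℂ → ℂ and μ ∈ ℂ with m(p+μ) ≠ 0 and m(p+μ−1) ≠ 0 for every natural number p, and set r(p) := m(p+μ)/m(p+μ−1). Assume B·s₀ = r(0)·s₀ and that there exist M > 0 and θ < 1 with |m(p+μ−1)/m(p+μ)| ≤ M and ‖B‖·|m(p+μ−1)/m(p+μ)| ≤ θ for all p ≥ 1, where ‖·‖ is the operator norm on n×n complex matrices induced by the Euclidean norm on ℂⁿ. Then for every p ≥ 1 the matrix r(p)·I − B is invertible with ‖(r(p)·I − B)⁻¹‖ ≤ M/(1−θ), the vectors s_p := (r(p)·I − B)⁻¹·A·s_{p−1} (p ≥ 1) satisfy ‖s_p‖ ≤ ‖s₀‖·(‖A‖·M/(1−θ))^p, and there exists ρ > 0 such that Σ_{p≥0} ‖s_p‖·ρ^p is summable; in particular the Floquet solution Σ_{p≥0} s_p z^{p+μ} of z∂_m y = (zA+B)y is convergent near the origin. -/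

import Mathlib

/-!
Writing `r(p)•1 - B = r(p) • (1 - r(p)⁻¹ • B)` with `‖r(p)⁻¹ • B‖ ≤ θ < 1`, the Neumann series
inverts the second factor with norm at most `1/(1-θ)`, so `‖(r(p)•1 - B)⁻¹‖ ≤ |r(p)⁻¹|/(1-θ)`.
Each step of the recursion therefore multiplies norms by at most `K = ‖A‖M/(1-θ)`, whence
`‖s_p‖ ≤ ‖s₀‖Kᵖ`, and for `ρ < 1/K` the series `Σ ‖s_p‖ρᵖ` is dominated by a geometric one.
-/

/-- The Euclidean norm of a vector in `ℂⁿ`. -/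
noncomputable def vecNorm {n : ℕ} (v : Fin n → ℂ) : ℝ :=
  ‖(WithLp.equiv 2 (Fin n → ℂ)).symm v‖

/-- The operator norm on `n×n` complex matrices induced by the Euclidean norm on `ℂⁿ`. -/
noncomputable def matNorm {n : ℕ} (M : Matrix (Fin n) (Fin n) ℂ) : ℝ :=
  ‖Matrix.toEuclideanCLM (𝕜 := ℂ) (n := Fin n) M‖

theorem isUnit_and_norm_inverse_smul_one_sub_le {𝕜 R : Type*} [NormedField 𝕜] [NormedRing R]
    [NormedAlgebra 𝕜 R] [HasSummableGeomSeries R] (hR : ‖(1 : R)‖ ≤ 1) {c : 𝕜} (hc : c ≠ 0)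
    {b : R} {θ : ℝ} (hθ : ‖b‖ * ‖c⁻¹‖ ≤ θ) (hθ1 : θ < 1) :
    IsUnit (c • 1 - b) ∧ ‖Ring.inverse (c • 1 - b)‖ ≤ ‖c⁻¹‖ / (1 - θ) := by
  set t := c⁻¹ • b
  have ht : ‖t‖ ≤ θ := (norm_smul_le _ _).trans (mul_comm ‖b‖ _ ▸ hθ)
  have ht1 : ‖t‖ < 1 := ht.trans_lt hθ1
  set u : Rˣ := Units.mk0 c hc • Units.oneSub t ht1
  have hu : (u : R) = c • 1 - b := by
    simp [u, t, Units.val_smul, smul_sub, smul_smul, hc]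
  have hu_inv : ((u⁻¹ : Rˣ) : R) = c⁻¹ • ∑' k, t ^ k := by
    simp only [u, Units.smul_inv, Units.val_smul, Units.smul_def, Units.val_inv_eq_inv_val,
      Units.val_mk0]
    rfl
  refine ⟨hu ▸ u.isUnit, ?_⟩
  rw [← hu, Ring.inverse_unit, hu_inv, div_eq_mul_inv]
  calc ‖c⁻¹ • ∑' k, t ^ k‖ ≤ ‖c⁻¹‖ * ‖∑' k, t ^ k‖ := norm_smul_le _ _
    _ ≤ ‖c⁻¹‖ * (1 - θ)⁻¹ := by
      gcongr
      calc ‖∑' k, t ^ k‖ ≤ ‖(1 : R)‖ - 1 + (1 - ‖t‖)⁻¹ := tsum_geometric_le_of_norm_lt_one t ht1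
        _ ≤ (1 - θ)⁻¹ := by
          have : (1 - ‖t‖)⁻¹ ≤ (1 - θ)⁻¹ := by gcongr
          linarith

theorem le_mul_pow_of_succ_le_mul {a : ℕ → ℝ} {K : ℝ} (hK : 0 ≤ K)
    (h : ∀ p, a (p + 1) ≤ K * a p) (p : ℕ) : a p ≤ a 0 * K ^ p := by
  induction p with
  | zero => simp
  | succ p ih =>
    calc a (p + 1) ≤ K * a p := h p
      _ ≤ K * (a 0 * K ^ p) := by gcongr
      _ = a 0 * K ^ (p + 1) := by ring

theorem exists_pos_summable_mul_pow_of_le_mul_pow {a : ℕ → ℝ} {C K : ℝ} (ha : ∀ p, 0 ≤ a p)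
    (h : ∀ p, a p ≤ C * K ^ p) : ∃ ρ : ℝ, 0 < ρ ∧ Summable (fun p => a p * ρ ^ p) := by
  set ρ := (|K| + 1)⁻¹
  have hρ : 0 < ρ := by positivity
  have hKρ : |K * ρ| < 1 := by
    rw [abs_mul, abs_of_pos hρ, ← div_eq_mul_inv, div_lt_one (by positivity)]
    linarith
  refine ⟨ρ, hρ, ((summable_geometric_of_abs_lt_one hKρ).mul_left C).of_nonneg_of_le
    (fun p => mul_nonneg (ha p) (pow_nonneg hρ.le p)) fun p => ?_⟩
  calc a p * ρ ^ p ≤ C * K ^ p * ρ ^ p := by gcongr; exact h p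
    _ = C * (K * ρ) ^ p := by ring

open scoped Matrix.Norms.L2Operator

theorem Matrix.l2_opNorm_one_le {𝕜 ι : Type*} [RCLike 𝕜] [Fintype ι] [DecidableEq ι] :
    ‖(1 : Matrix ι ι 𝕜)‖ ≤ 1 := by
  rw [Matrix.cstar_norm_def, map_one]
  exact ContinuousLinearMap.norm_id_le

theorem vecNorm_nonneg {n : ℕ} (v : Fin n → ℂ) : 0 ≤ vecNorm v := norm_nonneg _

theorem matNorm_eq_norm {n : ℕ} (M : Matrix (Fin n) (Fin n) ℂ) : matNorm M = ‖M‖ := rfl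

theorem vecNorm_mulVec_le {n : ℕ} (M : Matrix (Fin n) (Fin n) ℂ) (v : Fin n → ℂ) :
    vecNorm (M.mulVec v) ≤ matNorm M * vecNorm v :=
  (Matrix.toEuclideanCLM (𝕜 := ℂ) M).le_opNorm (WithLp.toLp 2 v)

theorem stmt3_general (n : ℕ) (A B : Matrix (Fin n) (Fin n) ℂ)
    (m : ℂ → ℂ) (μ : ℂ)
    (hm0 : ∀ p : ℕ, m ((p : ℂ) + μ) ≠ 0) (hm1 : ∀ p : ℕ, m ((p : ℂ) + μ - 1) ≠ 0)
    (r : ℕ → ℂ) (hr : ∀ p : ℕ, r p = m ((p : ℂ) + μ) / m ((p : ℂ) + μ - 1))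
    (s : ℕ → Fin n → ℂ)
    (M θ : ℝ) (hθ : θ < 1)
    (hb1 : ∀ p : ℕ, 1 ≤ p → ‖m ((p : ℂ) + μ - 1) / m ((p : ℂ) + μ)‖ ≤ M)
    (hb2 : ∀ p : ℕ, 1 ≤ p →
      matNorm B * ‖m ((p : ℂ) + μ - 1) / m ((p : ℂ) + μ)‖ ≤ θ)
    (hs : ∀ p : ℕ, 1 ≤ p →
      s p = (r p • (1 : Matrix (Fin n) (Fin n) ℂ) - B)⁻¹.mulVec (A.mulVec (s (p - 1)))) :
    (∀ p : ℕ, 1 ≤ p → IsUnit (r p • (1 : Matrix (Fin n) (Fin n) ℂ) - B) ∧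
      matNorm ((r p • (1 : Matrix (Fin n) (Fin n) ℂ) - B)⁻¹) ≤ M / (1 - θ)) ∧
    (∀ p : ℕ, vecNorm (s p) ≤ vecNorm (s 0) * (matNorm A * M / (1 - θ)) ^ p) ∧
    ∃ ρ : ℝ, 0 < ρ ∧ Summable (fun p : ℕ => vecNorm (s p) * ρ ^ p) := by
  have h1θ : 0 < 1 - θ := by linarith
  have hr_inv (p : ℕ) : (r p)⁻¹ = m ((p : ℂ) + μ - 1) / m ((p : ℂ) + μ) := by rw [hr, inv_div]
  have resolvent (p : ℕ) (hp : 1 ≤ p) : IsUnit (r p • (1 : Matrix (Fin n) (Fin n) ℂ) - B) ∧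
      matNorm ((r p • (1 : Matrix (Fin n) (Fin n) ℂ) - B)⁻¹) ≤ M / (1 - θ) := by
    have hrp : r p ≠ 0 := hr p ▸ div_ne_zero (hm0 p) (hm1 p)
    obtain ⟨hunit, hnorm⟩ := isUnit_and_norm_inverse_smul_one_sub_le
      (Matrix.l2_opNorm_one_le (𝕜 := ℂ) (ι := Fin n)) hrp (hr_inv p ▸ hb2 p hp) hθ
    refine ⟨hunit, ?_⟩
    rw [matNorm_eq_norm, Matrix.nonsing_inv_eq_ringInverse]
    exact hnorm.trans (div_le_div_of_nonneg_right (hr_inv p ▸ hb1 p hp) h1θ.le)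
  have step (p : ℕ) : vecNorm (s (p + 1)) ≤ matNorm A * M / (1 - θ) * vecNorm (s p) := by
    rw [hs (p + 1) p.succ_pos, Nat.add_sub_cancel]
    set T := (r (p + 1) • (1 : Matrix (Fin n) (Fin n) ℂ) - B)⁻¹
    calc vecNorm (T.mulVec (A.mulVec (s p))) ≤ matNorm T * vecNorm (A.mulVec (s p)) :=
          vecNorm_mulVec_le _ _
      _ ≤ matNorm T * (matNorm A * vecNorm (s p)) :=
          mul_le_mul_of_nonneg_left (vecNorm_mulVec_le _ _) (norm_nonneg _)
      _ ≤ M / (1 - θ) * (matNorm A * vecNorm (s p)) :=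
          mul_le_mul_of_nonneg_right (resolvent (p + 1) p.succ_pos).2
            (mul_nonneg (norm_nonneg _) (vecNorm_nonneg _))
      _ = matNorm A * M / (1 - θ) * vecNorm (s p) := by ring
  have hM : 0 ≤ M := (norm_nonneg _).trans (hb1 1 le_rfl)
  have hK : 0 ≤ matNorm A * M / (1 - θ) := div_nonneg (mul_nonneg (norm_nonneg _) hM) h1θ.le
  have geometric := le_mul_pow_of_succ_le_mul (a := fun p => vecNorm (s p)) hK step
  exact ⟨resolvent, geometric,
    exists_pos_summable_mul_pow_of_le_mul_pow (fun p => vecNorm_nonneg (s p)) geometric⟩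

/-- If `|m(p+μ−1)/m(p+μ)| ≤ M` and `‖B‖·|m(p+μ−1)/m(p+μ)| ≤ θ < 1` for all
`p ≥ 1`, then each `r(p)·I − B` is invertible with `‖(r(p)·I − B)⁻¹‖ ≤ M/(1−θ)` (Neumann
series), the Floquet coefficients satisfy `‖s_p‖ ≤ ‖s₀‖·(‖A‖·M/(1−θ))^p`, and there is
`ρ > 0` with `Σ ‖s_p‖·ρ^p` summable, so the Floquet solution converges near the origin. -/
theorem stmt3 (n : ℕ) (hn : 1 ≤ n) (A B : Matrix (Fin n) (Fin n) ℂ)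
    (m : ℂ → ℂ) (μ : ℂ)
    (hm0 : ∀ p : ℕ, m ((p : ℂ) + μ) ≠ 0) (hm1 : ∀ p : ℕ, m ((p : ℂ) + μ - 1) ≠ 0)
    (r : ℕ → ℂ) (hr : ∀ p : ℕ, r p = m ((p : ℂ) + μ) / m ((p : ℂ) + μ - 1))
    (s : ℕ → Fin n → ℂ)
    (hs0 : B.mulVec (s 0) = r 0 • s 0)
    (M θ : ℝ) (hM : 0 < M) (hθ : θ < 1)
    (hb1 : ∀ p : ℕ, 1 ≤ p → ‖m ((p : ℂ) + μ - 1) / m ((p : ℂ) + μ)‖ ≤ M)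
    (hb2 : ∀ p : ℕ, 1 ≤ p →
      matNorm B * ‖m ((p : ℂ) + μ - 1) / m ((p : ℂ) + μ)‖ ≤ θ)
    (hs : ∀ p : ℕ, 1 ≤ p →
      s p = (r p • (1 : Matrix (Fin n) (Fin n) ℂ) - B)⁻¹.mulVec (A.mulVec (s (p - 1)))) :
    (∀ p : ℕ, 1 ≤ p → IsUnit (r p • (1 : Matrix (Fin n) (Fin n) ℂ) - B) ∧
      matNorm ((r p • (1 : Matrix (Fin n) (Fin n) ℂ) - B)⁻¹) ≤ M / (1 - θ)) ∧
    (∀ p : ℕ, vecNorm (s p) ≤ vecNorm (s 0) * (matNorm A * M / (1 - θ)) ^ p) ∧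
    ∃ ρ : ℝ, 0 < ρ ∧ Summable (fun p : ℕ => vecNorm (s p) * ρ ^ p) :=
  stmt3_general n A B m μ hm0 hm1 r hr s M θ hθ hb1 hb2 hs
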